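/- If X is finite and F : X × X → X is associative and quasitrivial, then every automorphism σ of (X, ≾_F) (a permutation with x ≾_F y iff σ(x) ≾_F σ(y)) satisfies σ(x) ∼_F x for all x ∈ X; consequently F_σ = F for every such automorphism. -/

import Mathlib

def Assoc {X : Type*} (F : X → X → X) : Prop :=
  ∀ x y z, F (F x y) z = F x (F y z)

def Quasitrivial {X : Type*} (F : X → X → X) : Prop :=
  ∀ x y, F x y = x ∨ F x y = y

/-- The weak ordering associated with `F`: `x ≾_F y` iff `F x y = y` or `F y x = y`. -/
def wle {X : Type*} (F : X → X → X) (x y : X) : Prop :=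
  F x y = y ∨ F y x = y

/-- Symmetric part of `≾_F`. -/
def simF {X : Type*} (F : X → X → X) (x y : X) : Prop :=
  wle F x y ∧ wle F y x

/-- The σ-conjugate of `F`. -/
def conjOp {X : Type*} (σ : Equiv.Perm X) (F : X → X → X) : X → X → X :=
  fun x y => σ (F (σ.symm x) (σ.symm y))

/-!
An automorphism `σ` of a finite preorder cannot move a point strictly up: if `x ≺ σ x`, then
`σ x ≺ σ² x ≺ ⋯ ≺ σⁿ x = x`. For a total preorder this forces `σ x ∼ x`.
For an associative quasitrivial `F`, the restriction of `F` to a `∼_F`-class is a left or a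
right projection, while between two classes `F` returns the larger element. So for `a ≠ b`,
whether `F a b` is `a` or `b` depends only on the classes of `a` and `b`, and any map sending
each point into its own class commutes with `F`.
-/

namespace Equiv.Perm

variable {X : Type*} [Finite X] {r : X → X → Prop} [IsPreorder X r]

theorem apply_rel_of_rel_apply (σ : Perm X) (hσ : ∀ x y, r x y ↔ r (σ x) (σ y)) {x : X}
    (hx : r x (σ x)) : r (σ x) x := by
  have step : ∀ n : ℕ, r ((σ ^ n) x) ((σ ^ (n + 1)) x) := by
    intro n
    induction n with
    | zero => simpa using hx
    | succ n ih => simpa only [pow_succ', mul_apply] using (hσ _ _).mp ih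
  have chain : ∀ n : ℕ, r (σ x) ((σ ^ (n + 1)) x) := by
    intro n
    induction n with
    | zero => simpa using refl_of r (σ x)
    | succ n ih => exact trans_of r ih (step (n + 1))
  obtain ⟨n, hn⟩ := Nat.exists_eq_add_one.mpr (orderOf_pos σ)
  have hσn : (σ ^ (n + 1)) x = x := by rw [← hn, pow_orderOf_eq_one, one_apply]
  simpa only [hσn] using chain n

theorem rel_apply_and_apply_rel [Std.Total r] (σ : Perm X)
    (hσ : ∀ x y, r x y ↔ r (σ x) (σ y)) (x : X) : r x (σ x) ∧ r (σ x) x := by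
  have hσ_inv : ∀ x y, r x y ↔ r (σ⁻¹ x) (σ⁻¹ y) := fun x y => by
    simpa using (hσ (σ⁻¹ x) (σ⁻¹ y)).symm
  rcases total_of r x (σ x) with h | h
  · exact ⟨h, apply_rel_of_rel_apply σ hσ h⟩
  · refine ⟨?_, h⟩
    simpa using apply_rel_of_rel_apply σ⁻¹ hσ_inv (x := σ x) (by simpa using h)

end Equiv.Perm

section WeakOrder

variable {X : Type*} {F : X → X → X} {a b c a' b' : X}

theorem Quasitrivial.apply_self (hQ : Quasitrivial F) (x : X) : F x x = x :=
  (hQ x x).elim id id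

theorem Quasitrivial.apply_eq_right_of_not_wle (hQ : Quasitrivial F) (h : ¬ wle F b a) :
    F a b = b :=
  (hQ a b).resolve_left fun hab => h (Or.inr hab)

theorem Quasitrivial.apply_eq_left_of_not_wle (hQ : Quasitrivial F) (h : ¬ wle F a b) :
    F a b = a :=
  (hQ a b).resolve_right fun hab => h (Or.inl hab)

theorem wle_trans (hA : Assoc F) (hQ : Quasitrivial F) (hab : wle F a b) (hbc : wle F b c) :
    wle F a c := by
  by_contra h
  have hac : F a c = a := (hQ a c).resolve_right fun h' => h (Or.inl h')
  have hca : F c a = a := (hQ c a).resolve_left fun h' => h (Or.inr h')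
  rcases hab with hab | hab <;> rcases hbc with hbc | hbc
  · have e := hA a b c
    rw [hab, hbc, hac] at e
    exact h (Or.inl (hac.trans e.symm))
  · have e := hA c a b
    rw [hca, hab, hbc] at e
    subst e
    exact h (Or.inl hab)
  · have e := hA b a c
    rw [hab, hac, hbc, hab] at e
    subst e
    exact h (Or.inr hab)
  · have e := hA c b a
    rw [hbc, hab, hbc] at e
    exact h (Or.inr e)

theorem isPreorder_wle (hA : Assoc F) (hQ : Quasitrivial F) : IsPreorder X (wle F) where
  refl x := Or.inl (hQ.apply_self x)
  trans _ _ _ := wle_trans hA hQ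

theorem total_wle (hQ : Quasitrivial F) : Std.Total (wle F) where
  total x y := (hQ x y).elim (fun h => Or.inr (Or.inr h)) (fun h => Or.inl (Or.inl h))

theorem simF.symm (h : simF F a b) : simF F b a := ⟨h.2, h.1⟩

theorem simF.trans (hA : Assoc F) (hQ : Quasitrivial F) (hab : simF F a b) (hbc : simF F b c) :
    simF F a c :=
  ⟨wle_trans hA hQ hab.1 hbc.1, wle_trans hA hQ hbc.2 hab.2⟩

theorem wle_congr (hA : Assoc F) (hQ : Quasitrivial F) (ha : simF F a' a) (hb : simF F b' b) :
    wle F a' b' ↔ wle F a b :=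
  ⟨fun h => wle_trans hA hQ (wle_trans hA hQ ha.2 h) hb.1,
    fun h => wle_trans hA hQ (wle_trans hA hQ ha.1 h) hb.2⟩

theorem simF.apply_eq_left_iff (h : simF F a b) : F a b = a ↔ F b a = b := by
  constructor
  · intro hab
    rcases h.1 with h' | h'
    · obtain rfl : a = b := hab.symm.trans h'
      exact hab
    · exact h'
  · intro hba
    rcases h.2 with h' | h'
    · obtain rfl : b = a := hba.symm.trans h'
      exact hba
    · exact h'

theorem simF.apply_eq_left_of_apply_eq_left (hA : Assoc F) (hQ : Quasitrivial F)
    (hab : simF F a b) (hne : a ≠ b) (h : F a b = a) (hac : simF F a c) : F a c = a := by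
  by_contra hc
  have hac' : F a c = c := (hQ a c).resolve_left hc
  have hca : F c a = a :=
    (hQ c a).resolve_left fun h' => hc (hac.apply_eq_left_iff.mpr h')
  have hcb : c ≠ b := by
    rintro rfl
    exact hc h
  rcases hQ b c with hbc | hbc
  · have e := hA a b c
    rw [h, hbc, h] at e
    exact hc e
  · have hbc' : simF F b c := hab.symm.trans hA hQ hac
    have hcb' : F c b = b :=
      (hQ c b).resolve_left fun h' => hcb (hbc.symm.trans (hbc'.apply_eq_left_iff.mpr h'))
    have e := hA a c b
    rw [hac', hcb', h] at e
    exact hne e.symm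

theorem simF.apply_eq_left_of_simF (hA : Assoc F) (hQ : Quasitrivial F)
    (hab : simF F a b) (hne : a ≠ b) (h : F a b = a) (ha : simF F a a') (hb : simF F b b') :
    F a' b' = a' := by
  have hab' : simF F a b' := hab.trans hA hQ hb
  by_cases ha' : a' = a
  · subst ha'
    exact hab.apply_eq_left_of_apply_eq_left hA hQ hne h hab'
  · have haa' : F a' a = a' :=
      ha.apply_eq_left_iff.mp (hab.apply_eq_left_of_apply_eq_left hA hQ hne h ha)
    exact ha.symm.apply_eq_left_of_apply_eq_left hA hQ ha' haa' (ha.symm.trans hA hQ hab')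

theorem map_apply_of_simF (hA : Assoc F) (hQ : Quasitrivial F) {f : X → X}
    (hf : ∀ x, simF F (f x) x) (a b : X) : f (F a b) = F (f a) (f b) := by
  by_cases hab : wle F a b
  swap
  · have hab' : ¬ wle F (f a) (f b) := fun h => hab ((wle_congr hA hQ (hf a) (hf b)).mp h)
    rw [hQ.apply_eq_left_of_not_wle hab, hQ.apply_eq_left_of_not_wle hab']
  by_cases hba : wle F b a
  swap
  · have hba' : ¬ wle F (f b) (f a) := fun h => hba ((wle_congr hA hQ (hf b) (hf a)).mp h)
    rw [hQ.apply_eq_right_of_not_wle hba, hQ.apply_eq_right_of_not_wle hba']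
  have hsim : simF F a b := ⟨hab, hba⟩
  obtain rfl | hne := eq_or_ne a b
  · rw [hQ.apply_self, hQ.apply_self]
  obtain hfab | hfne := eq_or_ne (f a) (f b)
  · rw [← hfab, hQ.apply_self]
    rcases hQ a b with h | h <;> rw [h]
    exact hfab.symm
  have hsim_f : simF F (f a) (f b) := ((hf a).trans hA hQ hsim).trans hA hQ (hf b).symm
  rcases hQ a b with h | h <;> rw [h]
  · exact (hsim.apply_eq_left_of_simF hA hQ hne h (hf a).symm (hf b).symm).symm
  · refine ((hQ (f a) (f b)).resolve_left fun h' => hne ?_).symm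
    exact (hsim_f.apply_eq_left_of_simF hA hQ hfne h' (hf a) (hf b)).symm.trans h

end WeakOrder

theorem stmt_7 {X : Type*} [Finite X] (F : X → X → X)
    (hA : Assoc F) (hQ : Quasitrivial F) (σ : Equiv.Perm X)
    (haut : ∀ x y : X, wle F x y ↔ wle F (σ x) (σ y)) :
    (∀ x : X, simF F (σ x) x) ∧ conjOp σ F = F := by
  have := isPreorder_wle hA hQ
  have := total_wle hQ
  have hsim : ∀ x, simF F (σ x) x := fun x => (σ.rel_apply_and_apply_rel haut x).symm
  refine ⟨hsim, funext₂ fun x y => ?_⟩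
  rw [conjOp, map_apply_of_simF hA hQ hsim, Equiv.apply_symm_apply, Equiv.apply_symm_apply]
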